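/- Monotonicity: each iteration of Algorithm 3.1 does not increase the objective, i.e., I(Y||T(h^{t+1})U) ≤ I(Y||T(h^t)U) for all t, when h^0 > 0 componentwise and F(h^0) < ∞. -/

import Mathlib

open scoped BigOperators

/-- Csiszár I-divergence between nonnegative matrices, valued in `[0,∞]` (as `EReal`),
with conventions `0·log 0 = 0`, `0/0 = 0` and `p/0 = ∞` for `p > 0`. -/
noncomputable def IdivM {n m : ℕ} (Y Z : Fin n → Fin m → ℝ) : EReal :=
  ∑ i, ∑ j, if Z i j = 0 ∧ 0 < Y i j then (⊤ : EReal)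
    else ((Y i j * Real.log (Y i j / Z i j) - Y i j + Z i j : ℝ) : EReal)

/-- The columnwise convolution `(T(h)U)_{ij} = ∑_{k=0}^{min(i,q)} h_k U_{i-k,j}`. -/
def convM (q N m : ℕ) (h : Fin (q + 1) → ℝ) (U : Fin (N + 1) → Fin m → ℝ) :
    Fin (N + 1) → Fin m → ℝ :=
  fun i j => ∑ k : Fin (q + 1),
    if (k : ℕ) ≤ (i : ℕ) then
      h k * U ⟨(i : ℕ) - (k : ℕ), Nat.lt_of_le_of_lt (Nat.sub_le _ _) i.isLt⟩ j
    else 0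

/-- The partial row sum `∑_{l=0}^{N-k} U_{l·} = ∑_{l=0}^{N-k} ∑_j U_{lj}`. -/
def rowsum (N m : ℕ) (U : Fin (N + 1) → Fin m → ℝ) (k : ℕ) : ℝ :=
  ∑ l : Fin (N + 1), if (l : ℕ) ≤ N - k then ∑ j, U l j else 0

/-- One step of the alternating-minimization algorithm (Algorithm 3.1):
`h⁺_k = (h_k / ∑_{l=0}^{N-k} U_{l·}) ∑_j ∑_{i=k}^N Y_{ij} U_{i-k,j} / (T(h)U)_{ij}`. -/
noncomputable def upd (q N m : ℕ) (U Y : Fin (N + 1) → Fin m → ℝ)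
    (h : Fin (q + 1) → ℝ) : Fin (q + 1) → ℝ :=
  fun k => (h k / rowsum N m U k) *
    ∑ j, ∑ i : Fin (N + 1),
      if (k : ℕ) ≤ (i : ℕ) then
        Y i j * U ⟨(i : ℕ) - (k : ℕ), Nat.lt_of_le_of_lt (Nat.sub_le _ _) i.isLt⟩ j
          / convM q N m h U i j
      else 0

/-- The partial derivative `∂F/∂h_k` of `F(h) = I(Y‖T(h)U)`:
`∂F/∂h_k(h) = ∑_{l=0}^{N-k} U_{l·} - ∑_j ∑_{i=k}^N Y_{ij}U_{i-k,j}/(T(h)U)_{ij}`. -/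
noncomputable def gradF (q N m : ℕ) (U Y : Fin (N + 1) → Fin m → ℝ)
    (h : Fin (q + 1) → ℝ) (k : Fin (q + 1)) : ℝ :=
  rowsum N m U k -
    ∑ j, ∑ i : Fin (N + 1),
      if (k : ℕ) ≤ (i : ℕ) then
        Y i j * U ⟨(i : ℕ) - (k : ℕ), Nat.lt_of_le_of_lt (Nat.sub_le _ _) i.isLt⟩ j
          / convM q N m h U i j
      else 0


lemma sub_le_mul_log {x y : ℝ} (hx : 0 ≤ x) (hy : 0 ≤ y) (hxy : y = 0 → x = 0) :
    x - y ≤ x * Real.log (x / y) := by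
  rcases hx.eq_or_lt with h | hx0
  · rw [← h]; simpa using hy
  · rcases hy.eq_or_lt with h' | hy0
    · exact absurd (hxy h'.symm) hx0.ne'
    · have h1 : Real.log (y / x) ≤ y / x - 1 := Real.log_le_sub_one_of_pos (div_pos hy0 hx0)
      have h2 : Real.log (x / y) = Real.log x - Real.log y := Real.log_div hx0.ne' hy0.ne'
      have h3 : Real.log (y / x) = Real.log y - Real.log x := Real.log_div hy0.ne' hx0.ne'
      have h4 : 1 - y / x ≤ Real.log (x / y) := by rw [h2]; rw [h3] at h1; linarith
      have h5 : x * (1 - y / x) ≤ x * Real.log (x / y) :=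
        mul_le_mul_of_nonneg_left h4 hx0.le
      have h6 : x * (1 - y / x) = x - y := by field_simp
      linarith

lemma mul_log_sum_le {ι : Type*} (s : Finset ι) (a b : ι → ℝ)
    (ha : ∀ i ∈ s, 0 ≤ a i) (hb : ∀ i ∈ s, 0 ≤ b i)
    (hba : ∀ i ∈ s, b i = 0 → a i = 0) :
    (∑ i ∈ s, a i) * Real.log ((∑ i ∈ s, a i) / (∑ i ∈ s, b i)) ≤
      ∑ i ∈ s, a i * Real.log (a i / b i) := by
  by_cases hA0 : (∑ i ∈ s, a i) = 0
  · have h0 : ∀ i ∈ s, a i = 0 := (Finset.sum_eq_zero_iff_of_nonneg ha).1 hA0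
    rw [hA0, zero_mul]
    apply Finset.sum_nonneg
    intro i hi; rw [h0 i hi, zero_mul]
  by_cases hB0 : (∑ i ∈ s, b i) = 0
  · exact absurd (Finset.sum_eq_zero fun i hi =>
      hba i hi ((Finset.sum_eq_zero_iff_of_nonneg hb).1 hB0 i hi)) hA0
  set A := ∑ i ∈ s, a i with hA
  set B := ∑ i ∈ s, b i with hB
  have hApos : 0 < A := lt_of_le_of_ne (Finset.sum_nonneg ha) (Ne.symm hA0)
  have hBpos : 0 < B := lt_of_le_of_ne (Finset.sum_nonneg hb) (Ne.symm hB0)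
  have key : ∀ i ∈ s, a i * Real.log (A / B) + (a i - b i * (A / B)) ≤
      a i * Real.log (a i / b i) := by
    intro i hi
    rcases (ha i hi).eq_or_lt with h | hai
    · rw [← h]
      simp only [zero_mul, zero_sub, zero_add]
      have := mul_nonneg (hb i hi) (div_nonneg hApos.le hBpos.le)
      linarith
    · have hbi : 0 < b i := by
        rcases (hb i hi).eq_or_lt with h' | h'
        · exact absurd (hba i hi h'.symm) hai.ne'
        · exact h'
      have hy : 0 < b i * (A / B) := mul_pos hbi (div_pos hApos hBpos)
      have hL := sub_le_mul_log hai.le hy.le (fun h' => absurd h' hy.ne')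
      have hsplit : Real.log (a i / (b i * (A / B))) =
          Real.log (a i / b i) - Real.log (A / B) := by
        rw [div_mul_eq_div_div, Real.log_div (by positivity) (div_pos hApos hBpos).ne']
      rw [hsplit, mul_sub] at hL
      linarith
  have hsum := Finset.sum_le_sum key
  rw [Finset.sum_add_distrib, ← Finset.sum_mul, Finset.sum_sub_distrib, ← Finset.sum_mul] at hsum
  have hBA : B * (A / B) = A := by field_simp
  rw [← hA, ← hB, hBA] at hsum
  linarith

lemma ereal_coe_sum {ι : Type*} (s : Finset ι) (f : ι → ℝ) :
    ((∑ i ∈ s, f i : ℝ) : EReal) = ∑ i ∈ s, (f i : EReal) := by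
  induction s using Finset.cons_induction with
  | empty => simp
  | cons a s ha ih => rw [Finset.sum_cons, Finset.sum_cons, EReal.coe_add, ih]

lemma ereal_sum_ne_bot {ι : Type*} (s : Finset ι) (f : ι → EReal)
    (h : ∀ i ∈ s, f i ≠ ⊥) : ∑ i ∈ s, f i ≠ ⊥ := by
  induction s using Finset.cons_induction with
  | empty => simp
  | cons a s ha ih =>
    rw [Finset.sum_cons]
    intro hbot
    rcases EReal.add_eq_bot_iff.1 hbot with h1 | h1
    · exact h a (Finset.mem_cons_self a s) h1
    · exact ih (fun i hi => h i (Finset.mem_cons_of_mem hi)) h1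

lemma ereal_sum_eq_top {ι : Type*} [DecidableEq ι] (s : Finset ι) (f : ι → EReal)
    (h : ∀ i ∈ s, f i ≠ ⊥) {a : ι} (ha : a ∈ s) (hfa : f a = ⊤) : ∑ i ∈ s, f i = ⊤ := by
  rw [← Finset.add_sum_erase s f ha, hfa]
  exact EReal.top_add_of_ne_bot
    (ereal_sum_ne_bot _ _ fun i hi => h i (Finset.mem_of_mem_erase hi))

lemma sum_shift (N m : ℕ) (U : Fin (N+1) → Fin m → ℝ) (j : Fin m) (k : ℕ) (hk : k ≤ N) :
    (∑ i : Fin (N+1), if k ≤ (i : ℕ) then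
        U ⟨(i : ℕ) - k, Nat.lt_of_le_of_lt (Nat.sub_le _ _) i.isLt⟩ j else 0)
      = ∑ l : Fin (N+1), if (l : ℕ) ≤ N - k then U l j else 0 := by
  classical
  set g : ℕ → ℝ := fun l => if hl : l < N + 1 then U ⟨l, hl⟩ j else 0 with hg
  have h1 : (∑ i : Fin (N+1), if k ≤ (i : ℕ) then
        U ⟨(i : ℕ) - k, Nat.lt_of_le_of_lt (Nat.sub_le _ _) i.isLt⟩ j else 0)
      = ∑ i : Fin (N+1), (fun n : ℕ => if k ≤ n then g (n - k) else 0) ((i : ℕ)) := by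
    apply Finset.sum_congr rfl
    intro i _
    by_cases h : k ≤ (i : ℕ)
    · simp only [h, if_true, hg]
      rw [dif_pos (Nat.lt_of_le_of_lt (Nat.sub_le _ _) i.isLt)]
    · simp [h]
  have h2 : (∑ l : Fin (N+1), if (l : ℕ) ≤ N - k then U l j else 0)
      = ∑ l : Fin (N+1), (fun n : ℕ => if n ≤ N - k then g n else 0) ((l : ℕ)) := by
    apply Finset.sum_congr rfl
    intro l _
    by_cases h : (l : ℕ) ≤ N - k
    · simp only [h, if_true, hg]
      rw [dif_pos l.isLt]
    · simp [h]
  rw [h1, h2,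
    Fin.sum_univ_eq_sum_range (fun n => if k ≤ n then g (n - k) else 0) (N+1),
    Fin.sum_univ_eq_sum_range (fun n => if n ≤ N - k then g n else 0) (N+1),
    ← Finset.sum_filter, ← Finset.sum_filter]
  have e1 : (Finset.range (N+1)).filter (fun i => k ≤ i) = Finset.Ico k (N+1) := by
    ext x; simp [Finset.mem_Ico]; omega
  have e2 : (Finset.range (N+1)).filter (fun l => l ≤ N - k) = Finset.range (N - k + 1) := by
    ext x; simp; omega
  rw [e1, e2, Finset.sum_Ico_eq_sum_range]
  have e3 : N + 1 - k = N - k + 1 := by omega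
  rw [e3]
  apply Finset.sum_congr rfl
  intro x _
  congr 1
  omega
noncomputable def Bk (q N m : ℕ) (U Y : Fin (N + 1) → Fin m → ℝ)
    (h : Fin (q + 1) → ℝ) (k : Fin (q + 1)) : ℝ :=
  ∑ j, ∑ i : Fin (N + 1),
      if (k : ℕ) ≤ (i : ℕ) then
        Y i j * U ⟨(i : ℕ) - (k : ℕ), Nat.lt_of_le_of_lt (Nat.sub_le _ _) i.isLt⟩ j
          / convM q N m h U i j
      else 0

noncomputable def qf (q N m : ℕ) (U : Fin (N + 1) → Fin m → ℝ) (h : Fin (q + 1) → ℝ)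
    (i : Fin (N + 1)) (j : Fin m) (k : Fin (q + 1)) : ℝ :=
  if (k : ℕ) ≤ (i : ℕ) then
    h k * U ⟨(i : ℕ) - (k : ℕ), Nat.lt_of_le_of_lt (Nat.sub_le _ _) i.isLt⟩ j
  else 0

noncomputable def pf (q N m : ℕ) (U Y : Fin (N + 1) → Fin m → ℝ) (h : Fin (q + 1) → ℝ)
    (i : Fin (N + 1)) (j : Fin m) (k : Fin (q + 1)) : ℝ :=
  Y i j * qf q N m U h i j k / convM q N m h U i j

lemma upd_eq (q N m : ℕ) (U Y : Fin (N + 1) → Fin m → ℝ) (h : Fin (q + 1) → ℝ)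
    (k : Fin (q + 1)) :
    upd q N m U Y h k = h k / rowsum N m U k * Bk q N m U Y h k := rfl

lemma convM_eq (q N m : ℕ) (h : Fin (q + 1) → ℝ) (U : Fin (N + 1) → Fin m → ℝ)
    (i : Fin (N + 1)) (j : Fin m) :
    convM q N m h U i j = ∑ k, qf q N m U h i j k := rfl

section Core

variable {q N m : ℕ} {U Y : Fin (N + 1) → Fin m → ℝ}

lemma qf_nonneg (hU : ∀ i j, 0 ≤ U i j) (h : Fin (q + 1) → ℝ) (hh : ∀ k, 0 ≤ h k)
    (i : Fin (N + 1)) (j : Fin m) (k : Fin (q + 1)) : 0 ≤ qf q N m U h i j k := by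
  unfold qf; split
  · exact mul_nonneg (hh _) (hU _ _)
  · exact le_refl 0

lemma convM_nonneg (hU : ∀ i j, 0 ≤ U i j) (h : Fin (q + 1) → ℝ) (hh : ∀ k, 0 ≤ h k)
    (i : Fin (N + 1)) (j : Fin m) : 0 ≤ convM q N m h U i j := by
  rw [convM_eq]
  exact Finset.sum_nonneg fun k _ => qf_nonneg hU h hh i j k

lemma pf_nonneg (hU : ∀ i j, 0 ≤ U i j) (hY : ∀ i j, 0 ≤ Y i j) (h : Fin (q + 1) → ℝ)
    (hh : ∀ k, 0 ≤ h k) (i : Fin (N + 1)) (j : Fin m) (k : Fin (q + 1)) :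
    0 ≤ pf q N m U Y h i j k :=
  div_nonneg (mul_nonneg (hY _ _) (qf_nonneg hU h hh i j k)) (convM_nonneg hU h hh i j)

lemma Bk_nonneg (hU : ∀ i j, 0 ≤ U i j) (hY : ∀ i j, 0 ≤ Y i j) (h : Fin (q + 1) → ℝ)
    (hh : ∀ k, 0 ≤ h k) (k : Fin (q + 1)) : 0 ≤ Bk q N m U Y h k := by
  unfold Bk
  apply Finset.sum_nonneg; intro j _
  apply Finset.sum_nonneg; intro i _
  split
  · exact div_nonneg (mul_nonneg (hY _ _) (hU _ _)) (convM_nonneg hU h hh i j)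
  · exact le_refl 0

lemma rowsum_nonneg (hU : ∀ i j, 0 ≤ U i j) (k : ℕ) : 0 ≤ rowsum N m U k := by
  unfold rowsum
  apply Finset.sum_nonneg; intro l _
  split
  · exact Finset.sum_nonneg fun j _ => hU l j
  · exact le_refl 0

lemma upd_nonneg (hU : ∀ i j, 0 ≤ U i j) (hY : ∀ i j, 0 ≤ Y i j) (h : Fin (q + 1) → ℝ)
    (hh : ∀ k, 0 ≤ h k) : ∀ k, 0 ≤ upd q N m U Y h k := by
  intro k
  rw [upd_eq]
  exact mul_nonneg (div_nonneg (hh k) (rowsum_nonneg hU k)) (Bk_nonneg hU hY h hh k)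

lemma sum_qf (h : Fin (q + 1) → ℝ) (k : Fin (q + 1)) (hk : (k : ℕ) ≤ N) :
    ∑ j, ∑ i, qf q N m U h i j k = h k * rowsum N m U k := by
  have e1 : ∀ j, ∑ i, qf q N m U h i j k
      = h k * ∑ l : Fin (N + 1), (if (l : ℕ) ≤ N - (k : ℕ) then U l j else 0) := by
    intro j
    rw [← sum_shift N m U j k hk, Finset.mul_sum]
    apply Finset.sum_congr rfl; intro i _
    unfold qf
    by_cases hc : (k : ℕ) ≤ (i : ℕ)
    · simp only [hc, if_true]
    · simp [hc]
  rw [Finset.sum_congr rfl (fun j _ => e1 j), ← Finset.mul_sum]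
  congr 1
  unfold rowsum
  rw [Finset.sum_comm]
  apply Finset.sum_congr rfl; intro l _
  by_cases hc : (l : ℕ) ≤ N - (k : ℕ) <;> simp [hc]

lemma sum_pf (h : Fin (q + 1) → ℝ) (k : Fin (q + 1)) :
    ∑ j, ∑ i, pf q N m U Y h i j k = h k * Bk q N m U Y h k := by
  unfold Bk
  rw [Finset.mul_sum]
  apply Finset.sum_congr rfl; intro j _
  rw [Finset.mul_sum]
  apply Finset.sum_congr rfl; intro i _
  unfold pf qf
  by_cases hc : (k : ℕ) ≤ (i : ℕ)
  · simp only [hc, if_true]; ring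
  · simp [hc]

lemma sum_pf_k (hY : ∀ i j, 0 ≤ Y i j) (h : Fin (q + 1) → ℝ)
    (hYZ : ∀ i j, 0 < Y i j → 0 < convM q N m h U i j) (i : Fin (N + 1)) (j : Fin m) :
    ∑ k, pf q N m U Y h i j k = Y i j := by
  rcases (hY i j).eq_or_lt with h0 | h0
  · have hp : ∀ k, pf q N m U Y h i j k = 0 := by
      intro k; unfold pf; rw [← h0]; simp
    rw [Finset.sum_eq_zero fun k _ => hp k]
    exact h0
  · have hZ := hYZ i j h0
    unfold pf
    rw [← Finset.sum_div, ← Finset.mul_sum, ← convM_eq, mul_div_assoc, div_self hZ.ne', mul_one]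

lemma upd_pos (hqN : q ≤ N) (hU : ∀ i j, 0 ≤ U i j) (hY : ∀ i j, 0 ≤ Y i j)
    (h : Fin (q + 1) → ℝ) (hh : ∀ k, 0 ≤ h k)
    (hYZ : ∀ i j, 0 < Y i j → 0 < convM q N m h U i j)
    (i : Fin (N + 1)) (j : Fin m) (k : Fin (q + 1))
    (hki : (k : ℕ) ≤ (i : ℕ)) (hYij : 0 < Y i j) (hhk : 0 < h k)
    (hUij : 0 < U ⟨(i : ℕ) - (k : ℕ), Nat.lt_of_le_of_lt (Nat.sub_le _ _) i.isLt⟩ j) :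
    0 < upd q N m U Y h k := by
  have hkN : (k : ℕ) ≤ N := le_trans (Nat.lt_succ_iff.mp k.isLt) hqN
  have hZ := hYZ i j hYij
  have hB : 0 < Bk q N m U Y h k := by
    unfold Bk
    apply Finset.sum_pos'
    · intro j' _
      apply Finset.sum_nonneg; intro i' _
      split
      · exact div_nonneg (mul_nonneg (hY _ _) (hU _ _)) (convM_nonneg hU h hh i' j')
      · exact le_refl 0
    · refine ⟨j, Finset.mem_univ j, ?_⟩
      apply Finset.sum_pos'
      · intro i' _
        split
        · exact div_nonneg (mul_nonneg (hY _ _) (hU _ _)) (convM_nonneg hU h hh i' j)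
        · exact le_refl 0
      · refine ⟨i, Finset.mem_univ i, ?_⟩
        rw [if_pos hki]
        exact div_pos (mul_pos hYij hUij) hZ
  have hS : 0 < rowsum N m U k := by
    unfold rowsum
    apply Finset.sum_pos'
    · intro l _
      split
      · exact Finset.sum_nonneg fun j' _ => hU l j'
      · exact le_refl 0
    · refine ⟨⟨(i : ℕ) - (k : ℕ), Nat.lt_of_le_of_lt (Nat.sub_le _ _) i.isLt⟩,
        Finset.mem_univ _, ?_⟩
      rw [if_pos (Nat.sub_le_sub_right (Nat.lt_succ_iff.mp i.isLt) (k : ℕ))]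
      exact lt_of_lt_of_le hUij (Finset.single_le_sum (fun j' _ => hU _ j') (Finset.mem_univ j))
  rw [upd_eq]
  exact mul_pos (div_pos hhk hS) hB

lemma Zpos_step (hqN : q ≤ N) (hU : ∀ i j, 0 ≤ U i j) (hY : ∀ i j, 0 ≤ Y i j)
    (h : Fin (q + 1) → ℝ) (hh : ∀ k, 0 ≤ h k)
    (hYZ : ∀ i j, 0 < Y i j → 0 < convM q N m h U i j) :
    ∀ i j, 0 < Y i j → 0 < convM q N m (upd q N m U Y h) U i j := by
  intro i j hYij
  have hZ := hYZ i j hYij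
  rw [convM_eq] at hZ
  have hex : ∃ k, 0 < qf q N m U h i j k := by
    by_contra hcon
    push_neg at hcon
    have : ∑ k, qf q N m U h i j k ≤ 0 := Finset.sum_nonpos fun k _ => hcon k
    linarith
  obtain ⟨k, hk⟩ := hex
  have hki : (k : ℕ) ≤ (i : ℕ) := by
    by_contra hc
    unfold qf at hk
    rw [if_neg hc] at hk
    exact lt_irrefl 0 hk
  have hq : qf q N m U h i j k
      = h k * U ⟨(i : ℕ) - (k : ℕ), Nat.lt_of_le_of_lt (Nat.sub_le _ _) i.isLt⟩ j := by
    unfold qf; rw [if_pos hki]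
  rw [hq] at hk
  have hhk : 0 < h k := by
    rcases (hh k).eq_or_lt with h' | h'
    · rw [← h', zero_mul] at hk; exact absurd hk (lt_irrefl 0)
    · exact h'
  have hUij : 0 < U ⟨(i : ℕ) - (k : ℕ), Nat.lt_of_le_of_lt (Nat.sub_le _ _) i.isLt⟩ j := by
    rcases (hU ⟨(i : ℕ) - (k : ℕ), Nat.lt_of_le_of_lt (Nat.sub_le _ _) i.isLt⟩ j).eq_or_lt
      with h' | h'
    · rw [← h', mul_zero] at hk; exact absurd hk (lt_irrefl 0)
    · exact h'
  have hupd := upd_pos hqN hU hY h hh hYZ i j k hki hYij hhk hUij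
  rw [convM_eq]
  have hterm : 0 < qf q N m U (upd q N m U Y h) i j k := by
    unfold qf; rw [if_pos hki]; exact mul_pos hupd hUij
  exact lt_of_lt_of_le hterm (Finset.single_le_sum
    (fun k' _ => qf_nonneg hU _ (upd_nonneg hU hY h hh) i j k') (Finset.mem_univ k))

end Core
section Core2

variable {q N m : ℕ} {U Y : Fin (N + 1) → Fin m → ℝ}

lemma step1 (hqN : q ≤ N) (hU : ∀ i j, 0 ≤ U i j) (hY : ∀ i j, 0 ≤ Y i j)
    (h : Fin (q + 1) → ℝ) (hh : ∀ k, 0 ≤ h k)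
    (hYZ : ∀ i j, 0 < Y i j → 0 < convM q N m h U i j) (i : Fin (N + 1)) (j : Fin m) :
    Y i j * Real.log (Y i j / convM q N m (upd q N m U Y h) U i j)
      ≤ ∑ k, pf q N m U Y h i j k *
          Real.log (pf q N m U Y h i j k / qf q N m U (upd q N m U Y h) i j k) := by
  have hA : ∑ k, pf q N m U Y h i j k = Y i j := sum_pf_k hY h hYZ i j
  have hB : ∑ k, qf q N m U (upd q N m U Y h) i j k = convM q N m (upd q N m U Y h) U i j :=
    (convM_eq q N m _ U i j).symm
  have hba : ∀ k ∈ Finset.univ, qf q N m U (upd q N m U Y h) i j k = 0 →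
      pf q N m U Y h i j k = 0 := by
    intro k _ hq0
    by_contra hp
    have hppos : 0 < pf q N m U Y h i j k :=
      lt_of_le_of_ne (pf_nonneg hU hY h hh i j k) (Ne.symm hp)
    have hqne : qf q N m U h i j k ≠ 0 := by
      intro h0
      apply hp
      unfold pf; rw [h0, mul_zero, zero_div]
    have hki : (k : ℕ) ≤ (i : ℕ) := by
      by_contra hc
      apply hqne
      unfold qf; rw [if_neg hc]
    have hq : qf q N m U h i j k
        = h k * U ⟨(i : ℕ) - (k : ℕ), Nat.lt_of_le_of_lt (Nat.sub_le _ _) i.isLt⟩ j := by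
      unfold qf; rw [if_pos hki]
    have hYij : 0 < Y i j := by
      rcases (hY i j).eq_or_lt with h' | h'
      · exfalso; apply hp; unfold pf; rw [← h', zero_mul, zero_div]
      · exact h'
    have hqpos : 0 < qf q N m U h i j k :=
      lt_of_le_of_ne (qf_nonneg hU h hh i j k) (Ne.symm hqne)
    rw [hq] at hqpos
    have hhk : 0 < h k := by
      rcases (hh k).eq_or_lt with h' | h'
      · rw [← h', zero_mul] at hqpos; exact absurd hqpos (lt_irrefl 0)
      · exact h'
    have hUij : 0 < U ⟨(i : ℕ) - (k : ℕ), Nat.lt_of_le_of_lt (Nat.sub_le _ _) i.isLt⟩ j := by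
      rcases (hU ⟨(i : ℕ) - (k : ℕ), Nat.lt_of_le_of_lt (Nat.sub_le _ _) i.isLt⟩ j).eq_or_lt
        with h' | h'
      · rw [← h', mul_zero] at hqpos; exact absurd hqpos (lt_irrefl 0)
      · exact h'
    have hupd := upd_pos hqN hU hY h hh hYZ i j k hki hYij hhk hUij
    have : 0 < qf q N m U (upd q N m U Y h) i j k := by
      unfold qf; rw [if_pos hki]; exact mul_pos hupd hUij
    rw [hq0] at this
    exact absurd this (lt_irrefl 0)
  have := mul_log_sum_le Finset.univ (fun k => pf q N m U Y h i j k)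
    (fun k => qf q N m U (upd q N m U Y h) i j k)
    (fun k _ => pf_nonneg hU hY h hh i j k)
    (fun k _ => qf_nonneg hU _ (upd_nonneg hU hY h hh) i j k) hba
  rwa [hA, hB] at this

lemma step2 (hU : ∀ i j, 0 ≤ U i j) (hY : ∀ i j, 0 ≤ Y i j)
    (h : Fin (q + 1) → ℝ) (hh : ∀ k, 0 ≤ h k)
    (hYZ : ∀ i j, 0 < Y i j → 0 < convM q N m h U i j) (i : Fin (N + 1)) (j : Fin m) :
    ∑ k, pf q N m U Y h i j k *
        Real.log (pf q N m U Y h i j k / qf q N m U h i j k)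
      = Y i j * Real.log (Y i j / convM q N m h U i j) := by
  rcases (hY i j).eq_or_lt with h0 | h0
  · have hp : ∀ k, pf q N m U Y h i j k = 0 := by
      intro k; unfold pf; rw [← h0]; simp
    rw [Finset.sum_eq_zero fun k _ => by rw [hp k, zero_mul], ← h0, zero_mul]
  · have hZ := hYZ i j h0
    have hpt : ∀ k, pf q N m U Y h i j k *
        Real.log (pf q N m U Y h i j k / qf q N m U h i j k)
        = pf q N m U Y h i j k * Real.log (Y i j / convM q N m h U i j) := by
      intro k
      by_cases hq : qf q N m U h i j k = 0
      · unfold pf; rw [hq]; simp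
      · have heq : pf q N m U Y h i j k / qf q N m U h i j k
            = Y i j / convM q N m h U i j := by
          unfold pf
          field_simp
        rw [heq]
    rw [Finset.sum_congr rfl (fun k _ => hpt k), ← Finset.sum_mul, sum_pf_k hY h hYZ i j]

lemma step3 (hqN : q ≤ N) (hU : ∀ i j, 0 ≤ U i j) (hY : ∀ i j, 0 ≤ Y i j)
    (h : Fin (q + 1) → ℝ) (hh : ∀ k, 0 ≤ h k)
    (hYZ : ∀ i j, 0 < Y i j → 0 < convM q N m h U i j) (k : Fin (q + 1)) :
    (∑ j, ∑ i, (pf q N m U Y h i j k *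
        Real.log (pf q N m U Y h i j k / qf q N m U (upd q N m U Y h) i j k)
        + qf q N m U (upd q N m U Y h) i j k))
      ≤ ∑ j, ∑ i, (pf q N m U Y h i j k *
        Real.log (pf q N m U Y h i j k / qf q N m U h i j k)
        + qf q N m U h i j k) := by
  have hkN : (k : ℕ) ≤ N := le_trans (Nat.lt_succ_iff.mp k.isLt) hqN
  by_cases hhk0 : h k = 0
  · have hq0 : ∀ (i : Fin (N + 1)) (j : Fin m), qf q N m U h i j k = 0 := by
      intro i j; unfold qf; split <;> simp [hhk0]
    have hp0 : ∀ (i : Fin (N + 1)) (j : Fin m), pf q N m U Y h i j k = 0 := by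
      intro i j; unfold pf; rw [hq0, mul_zero, zero_div]
    have hh'k : upd q N m U Y h k = 0 := by
      rw [upd_eq, hhk0, zero_div, zero_mul]
    have hq'0 : ∀ (i : Fin (N + 1)) (j : Fin m), qf q N m U (upd q N m U Y h) i j k = 0 := by
      intro i j; unfold qf; split <;> simp [hh'k]
    simp [hp0, hq0, hq'0]
  have hhk : 0 < h k := lt_of_le_of_ne (hh k) (Ne.symm hhk0)
  by_cases hBk0 : Bk q N m U Y h k = 0
  · have hterm : ∀ (j : Fin m) (i : Fin (N + 1)),
        (if (k : ℕ) ≤ (i : ℕ) then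
          Y i j * U ⟨(i : ℕ) - (k : ℕ), Nat.lt_of_le_of_lt (Nat.sub_le _ _) i.isLt⟩ j
            / convM q N m h U i j else 0) = 0 := by
      intro j i
      have hnn : ∀ (j' : Fin m) (i' : Fin (N + 1)), 0 ≤
          (if (k : ℕ) ≤ (i' : ℕ) then
            Y i' j' * U ⟨(i' : ℕ) - (k : ℕ), Nat.lt_of_le_of_lt (Nat.sub_le _ _) i'.isLt⟩ j'
              / convM q N m h U i' j' else 0) := by
        intro j' i'
        split
        · exact div_nonneg (mul_nonneg (hY _ _) (hU _ _)) (convM_nonneg hU h hh i' j')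
        · exact le_refl 0
      have h1 := (Finset.sum_eq_zero_iff_of_nonneg
        (fun j' _ => Finset.sum_nonneg fun i' _ => hnn j' i')).1 hBk0 j (Finset.mem_univ j)
      exact (Finset.sum_eq_zero_iff_of_nonneg (fun i' _ => hnn j i')).1 h1 i (Finset.mem_univ i)
    have hp0 : ∀ (i : Fin (N + 1)) (j : Fin m), pf q N m U Y h i j k = 0 := by
      intro i j
      unfold pf qf
      by_cases hc : (k : ℕ) ≤ (i : ℕ)
      · have ht := hterm j i
        rw [if_pos hc] at ht
        rw [if_pos hc]
        calc Y i j * (h k * U ⟨(i : ℕ) - (k : ℕ),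
              Nat.lt_of_le_of_lt (Nat.sub_le _ _) i.isLt⟩ j) / convM q N m h U i j
            = h k * (Y i j * U ⟨(i : ℕ) - (k : ℕ),
              Nat.lt_of_le_of_lt (Nat.sub_le _ _) i.isLt⟩ j / convM q N m h U i j) := by ring
          _ = 0 := by rw [ht, mul_zero]
      · rw [if_neg hc, mul_zero, zero_div]
    have hh'k : upd q N m U Y h k = 0 := by rw [upd_eq, hBk0, mul_zero]
    have hq'0 : ∀ (i : Fin (N + 1)) (j : Fin m), qf q N m U (upd q N m U Y h) i j k = 0 := by
      intro i j; unfold qf; split <;> simp [hh'k]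
    simp only [hp0, hq'0, zero_mul, add_zero, zero_add, Finset.sum_const_zero]
    apply Finset.sum_nonneg; intro j _
    apply Finset.sum_nonneg; intro i _
    exact qf_nonneg hU h hh i j k
  have hBk : 0 < Bk q N m U Y h k := lt_of_le_of_ne (Bk_nonneg hU hY h hh k) (Ne.symm hBk0)
  have hS : 0 < rowsum N m U k := by
    rcases (rowsum_nonneg (N := N) (m := m) hU (k : ℕ)).eq_or_lt with h0 | h0
    · exfalso
      have hU0 : ∀ (l : Fin (N + 1)), (l : ℕ) ≤ N - (k : ℕ) → ∀ j, U l j = 0 := by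
        intro l hl j
        have h1 := (Finset.sum_eq_zero_iff_of_nonneg (fun l' (_ : l' ∈ Finset.univ) => by
          split
          · exact Finset.sum_nonneg fun j' _ => hU l' j'
          · exact le_refl 0)).1 h0.symm l (Finset.mem_univ l)
        rw [if_pos hl] at h1
        exact (Finset.sum_eq_zero_iff_of_nonneg (fun j' _ => hU l j')).1 h1 j (Finset.mem_univ j)
      apply hBk0
      unfold Bk
      apply Finset.sum_eq_zero; intro j _
      apply Finset.sum_eq_zero; intro i _
      by_cases hc : (k : ℕ) ≤ (i : ℕ)
      · rw [if_pos hc,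
          hU0 ⟨(i : ℕ) - (k : ℕ), Nat.lt_of_le_of_lt (Nat.sub_le _ _) i.isLt⟩
            (Nat.sub_le_sub_right (Nat.lt_succ_iff.mp i.isLt) (k : ℕ)) j,
          mul_zero, zero_div]
      · rw [if_neg hc]
    · exact h0
  have hh'k : 0 < upd q N m U Y h k := by
    rw [upd_eq]; exact mul_pos (div_pos hhk hS) hBk
  set h' := upd q N m U Y h with hh'def
  set C := Real.log (h k / h' k) with hC
  have hpt : ∀ (i : Fin (N + 1)) (j : Fin m),
      pf q N m U Y h i j k * Real.log (pf q N m U Y h i j k / qf q N m U h' i j k)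
      = pf q N m U Y h i j k * Real.log (pf q N m U Y h i j k / qf q N m U h i j k)
        + pf q N m U Y h i j k * C := by
    intro i j
    by_cases hp : pf q N m U Y h i j k = 0
    · rw [hp]; simp
    · have hppos : 0 < pf q N m U Y h i j k :=
        lt_of_le_of_ne (pf_nonneg hU hY h hh i j k) (Ne.symm hp)
      have hqne : qf q N m U h i j k ≠ 0 := by
        intro h0; apply hp; unfold pf; rw [h0, mul_zero, zero_div]
      have hki : (k : ℕ) ≤ (i : ℕ) := by
        by_contra hc; apply hqne; unfold qf; rw [if_neg hc]
      have hqpos : 0 < qf q N m U h i j k :=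
        lt_of_le_of_ne (qf_nonneg hU h hh i j k) (Ne.symm hqne)
      have hqe : qf q N m U h i j k
          = h k * U ⟨(i : ℕ) - (k : ℕ), Nat.lt_of_le_of_lt (Nat.sub_le _ _) i.isLt⟩ j := by
        unfold qf; rw [if_pos hki]
      have hUpos : 0 < U ⟨(i : ℕ) - (k : ℕ), Nat.lt_of_le_of_lt (Nat.sub_le _ _) i.isLt⟩ j := by
        rcases (hU ⟨(i : ℕ) - (k : ℕ), Nat.lt_of_le_of_lt (Nat.sub_le _ _) i.isLt⟩ j).eq_or_lt
          with h' | h'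
        · rw [hqe, ← h', mul_zero] at hqpos; exact absurd hqpos (lt_irrefl 0)
        · exact h'
      have hq'e : qf q N m U h' i j k
          = h' k * U ⟨(i : ℕ) - (k : ℕ), Nat.lt_of_le_of_lt (Nat.sub_le _ _) i.isLt⟩ j := by
        unfold qf; rw [if_pos hki]
      have hq'pos : 0 < qf q N m U h' i j k := by
        rw [hq'e]; exact mul_pos hh'k hUpos
      have hsplit : pf q N m U Y h i j k / qf q N m U h' i j k
          = pf q N m U Y h i j k / qf q N m U h i j k * (h k / h' k) := by
        rw [hqe, hq'e]
        field_simp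
      rw [hsplit, Real.log_mul (div_pos hppos hqpos).ne' (div_pos hhk hh'k).ne', mul_add, hC]
  have hLHS : (∑ j, ∑ i, (pf q N m U Y h i j k *
        Real.log (pf q N m U Y h i j k / qf q N m U h' i j k) + qf q N m U h' i j k))
      = (∑ j, ∑ i, pf q N m U Y h i j k *
          Real.log (pf q N m U Y h i j k / qf q N m U h i j k))
        + h k * Bk q N m U Y h k * C + h' k * rowsum N m U k := by
    have e0 : ∀ (j : Fin m) (i : Fin (N + 1)),
        pf q N m U Y h i j k * Real.log (pf q N m U Y h i j k / qf q N m U h' i j k)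
          + qf q N m U h' i j k
        = pf q N m U Y h i j k * Real.log (pf q N m U Y h i j k / qf q N m U h i j k)
          + pf q N m U Y h i j k * C + qf q N m U h' i j k := by
      intro j i; rw [hpt i j]
    rw [Finset.sum_congr rfl fun j _ => Finset.sum_congr rfl fun i _ => e0 j i]
    have e1 : ∀ j : Fin m, (∑ i, (pf q N m U Y h i j k *
          Real.log (pf q N m U Y h i j k / qf q N m U h i j k)
          + pf q N m U Y h i j k * C + qf q N m U h' i j k))
        = (∑ i, pf q N m U Y h i j k *
            Real.log (pf q N m U Y h i j k / qf q N m U h i j k))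
          + (∑ i, pf q N m U Y h i j k) * C + ∑ i, qf q N m U h' i j k := by
      intro j
      rw [Finset.sum_add_distrib, Finset.sum_add_distrib, ← Finset.sum_mul]
    rw [Finset.sum_congr rfl fun j _ => e1 j, Finset.sum_add_distrib, Finset.sum_add_distrib,
      ← Finset.sum_mul, sum_pf h k, sum_qf h' k hkN]
  have hRHS : (∑ j, ∑ i, (pf q N m U Y h i j k *
        Real.log (pf q N m U Y h i j k / qf q N m U h i j k) + qf q N m U h i j k))
      = (∑ j, ∑ i, pf q N m U Y h i j k *
          Real.log (pf q N m U Y h i j k / qf q N m U h i j k))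
        + h k * rowsum N m U k := by
    rw [Finset.sum_congr rfl fun j (_ : j ∈ Finset.univ) => Finset.sum_add_distrib,
      Finset.sum_add_distrib, sum_qf h k hkN]
  rw [hLHS, hRHS]
  have hratio : h k / h' k = rowsum N m U k / Bk q N m U Y h k := by
    rw [hh'def, upd_eq]
    field_simp
    try ring
  have hprod : h' k * rowsum N m U k = h k * Bk q N m U Y h k := by
    rw [hh'def, upd_eq]
    field_simp
    try ring
  have hkey : Bk q N m U Y h k * Real.log (rowsum N m U k / Bk q N m U Y h k)
      ≤ rowsum N m U k - Bk q N m U Y h k := by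
    have hsub := sub_le_mul_log hBk.le hS.le (fun h0 => absurd h0 hS.ne')
    have hlog : Real.log (rowsum N m U k / Bk q N m U Y h k)
        = - Real.log (Bk q N m U Y h k / rowsum N m U k) := by
      rw [Real.log_div hS.ne' hBk.ne', Real.log_div hBk.ne' hS.ne']; ring
    rw [hlog]
    nlinarith [hsub]
  rw [hC, hratio, hprod]
  nlinarith [mul_le_mul_of_nonneg_left hkey hhk.le]

end Core2
noncomputable def Gaux (q N m : ℕ) (U Y : Fin (N + 1) → Fin m → ℝ)
    (h h2 : Fin (q + 1) → ℝ) : ℝ :=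
  ∑ k, ∑ j, ∑ i, (pf q N m U Y h i j k *
      Real.log (pf q N m U Y h i j k / qf q N m U h2 i j k) + qf q N m U h2 i j k)

lemma Gaux_eq (q N m : ℕ) (U Y : Fin (N + 1) → Fin m → ℝ) (h h2 : Fin (q + 1) → ℝ) :
    Gaux q N m U Y h h2 = ∑ i, ∑ j, ((∑ k, pf q N m U Y h i j k *
        Real.log (pf q N m U Y h i j k / qf q N m U h2 i j k)) + convM q N m h2 U i j) := by
  unfold Gaux
  rw [Finset.sum_comm]
  rw [Finset.sum_congr rfl fun j (_ : j ∈ Finset.univ) => Finset.sum_comm]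
  rw [Finset.sum_comm]
  apply Finset.sum_congr rfl; intro i _
  apply Finset.sum_congr rfl; intro j _
  rw [Finset.sum_add_distrib, ← convM_eq]

section Core3

variable {q N m : ℕ} {U Y : Fin (N + 1) → Fin m → ℝ}

lemma Freal_step (hqN : q ≤ N) (hU : ∀ i j, 0 ≤ U i j) (hY : ∀ i j, 0 ≤ Y i j)
    (h : Fin (q + 1) → ℝ) (hh : ∀ k, 0 ≤ h k)
    (hYZ : ∀ i j, 0 < Y i j → 0 < convM q N m h U i j) :
    ∑ i, ∑ j, (Y i j * Real.log (Y i j / convM q N m (upd q N m U Y h) U i j) - Y i j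
        + convM q N m (upd q N m U Y h) U i j)
      ≤ ∑ i, ∑ j, (Y i j * Real.log (Y i j / convM q N m h U i j) - Y i j
        + convM q N m h U i j) := by
  have key : (∑ i, ∑ j, (Y i j * Real.log (Y i j / convM q N m (upd q N m U Y h) U i j)
        + convM q N m (upd q N m U Y h) U i j))
      ≤ ∑ i, ∑ j, (Y i j * Real.log (Y i j / convM q N m h U i j) + convM q N m h U i j) := by
    calc (∑ i, ∑ j, (Y i j * Real.log (Y i j / convM q N m (upd q N m U Y h) U i j)
          + convM q N m (upd q N m U Y h) U i j))
        ≤ Gaux q N m U Y h (upd q N m U Y h) := by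
          rw [Gaux_eq]
          apply Finset.sum_le_sum; intro i _
          apply Finset.sum_le_sum; intro j _
          exact add_le_add (step1 hqN hU hY h hh hYZ i j) le_rfl
      _ ≤ Gaux q N m U Y h h := by
          unfold Gaux
          exact Finset.sum_le_sum fun k _ => step3 hqN hU hY h hh hYZ k
      _ = ∑ i, ∑ j, (Y i j * Real.log (Y i j / convM q N m h U i j)
            + convM q N m h U i j) := by
          rw [Gaux_eq]
          apply Finset.sum_congr rfl; intro i _
          apply Finset.sum_congr rfl; intro j _
          rw [step2 hU hY h hh hYZ i j]
  have expand : ∀ W : Fin (N + 1) → Fin m → ℝ,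
      (∑ i, ∑ j, (Y i j * Real.log (Y i j / W i j) - Y i j + W i j))
      = (∑ i, ∑ j, (Y i j * Real.log (Y i j / W i j) + W i j)) - ∑ i, ∑ j, Y i j := by
    intro W
    rw [← Finset.sum_sub_distrib]
    apply Finset.sum_congr rfl; intro i _
    rw [← Finset.sum_sub_distrib]
    apply Finset.sum_congr rfl; intro j _
    ring
  rw [expand, expand]
  exact sub_le_sub_right key _

end Core3

lemma IdivM_eq_coe {n m : ℕ} (Y Z : Fin n → Fin m → ℝ)
    (hgood : ∀ i j, ¬(Z i j = 0 ∧ 0 < Y i j)) :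
    IdivM Y Z = ((∑ i, ∑ j, (Y i j * Real.log (Y i j / Z i j) - Y i j + Z i j) : ℝ) : EReal) := by
  unfold IdivM
  rw [ereal_coe_sum]
  apply Finset.sum_congr rfl; intro i _
  rw [ereal_coe_sum]
  apply Finset.sum_congr rfl; intro j _
  rw [if_neg (hgood i j)]

lemma IdivM_eq_top {n m : ℕ} (Y Z : Fin n → Fin m → ℝ) (i : Fin n) (j : Fin m)
    (hz : Z i j = 0) (hy : 0 < Y i j) : IdivM Y Z = ⊤ := by
  unfold IdivM
  have hnb : ∀ (i' : Fin n), (∑ j', if Z i' j' = 0 ∧ 0 < Y i' j' then (⊤ : EReal)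
      else ((Y i' j' * Real.log (Y i' j' / Z i' j') - Y i' j' + Z i' j' : ℝ) : EReal)) ≠ ⊥ := by
    intro i'
    apply ereal_sum_ne_bot
    intro j' _
    split
    · simp
    · exact EReal.coe_ne_bot _
  apply ereal_sum_eq_top _ _ (fun i' _ => hnb i') (Finset.mem_univ i)
  apply ereal_sum_eq_top _ _ (fun j' _ => ?_) (Finset.mem_univ j)
  · rw [if_pos ⟨hz, hy⟩]
  · split
    · simp
    · exact EReal.coe_ne_bot _
/-- monotonicity.  Each iteration of the algorithm does not increase the
objective: `I(Y‖T(hᵗ⁺¹)U) ≤ I(Y‖T(hᵗ)U)` for all `t`, when `h⁰ > 0` componentwise and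
`F(h⁰) < ∞`. -/
theorem upd_monotone (q N m : ℕ) (hqN : q ≤ N)
    (U Y : Fin (N + 1) → Fin m → ℝ)
    (hU : ∀ i j, 0 ≤ U i j) (hY : ∀ i j, 0 ≤ Y i j)
    (h₀ : Fin (q + 1) → ℝ) (h₀pos : ∀ k, 0 < h₀ k)
    (hfin : IdivM Y (convM q N m h₀ U) < ⊤) :
    ∀ t : ℕ,
      IdivM Y (convM q N m ((upd q N m U Y)^[t + 1] h₀) U)
        ≤ IdivM Y (convM q N m ((upd q N m U Y)^[t] h₀) U) := by
  intro t
  have hnn : ∀ s : ℕ, ∀ k, 0 ≤ (upd q N m U Y)^[s] h₀ k := by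
    intro s
    induction s with
    | zero => exact fun k => (h₀pos k).le
    | succ n ih =>
      rw [Function.iterate_succ_apply']
      exact upd_nonneg hU hY _ ih
  set h : Fin (q + 1) → ℝ := (upd q N m U Y)^[t] h₀ with hhdef
  have hh : ∀ k, 0 ≤ h k := hnn t
  have hsucc : (upd q N m U Y)^[t + 1] h₀ = upd q N m U Y h := by
    rw [hhdef, Function.iterate_succ_apply']
  by_cases hc : ∀ i j, 0 < Y i j → 0 < convM q N m h U i j
  · have h1 := Zpos_step hqN hU hY h hh hc
    rw [hsucc, IdivM_eq_coe Y _ (fun i j hb => (h1 i j hb.2).ne' hb.1),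
      IdivM_eq_coe Y _ (fun i j hb => (hc i j hb.2).ne' hb.1)]
    exact EReal.coe_le_coe_iff.mpr (Freal_step hqN hU hY h hh hc)
  · push_neg at hc
    obtain ⟨i, j, hYij, hZij⟩ := hc
    have hZ0 : convM q N m h U i j = 0 := le_antisymm hZij (convM_nonneg hU h hh i j)
    rw [IdivM_eq_top Y _ i j hZ0 hYij]
    exact le_top
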